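/- For all positive integers x, y, r, R, m, L and all i with 1 \leq i \leq L, the power series W(i) = q^{m(i-1)+x}(1-q^{(r-1)x})(1-q^{Ry})(1-q^{m(i-1)+y}) / [P(i) \cdot Q(L)/Q(i-1)] has nonnegative coefficients, where P(i) = (q^x,q^y,q^{rx+Ry};q^m)_i and Q(i) = (q^{rx},q^{Ry},q^{x+y};q^m)_i. -/

import Mathlib

/-!
Each numerator factor of `W(i)` is cancelled, up to a finite geometric sum, by a denominator
factor whose exponent divides its own: `1 - q^{(r-1)x}` by `1 - q^x`, `1 - q^{m(i-1)+y}` by the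
last factor of `(q^y;q^m)_i`, and `1 - q^{Ry}` by `1 - q^y` when `i ≥ 2`, or by the first factor
`1 - q^{Ry}` of `Q(L)/Q(0)` when `i = 1`. What is left is a monomial, geometric sums and
reciprocals `1/(1 - q^a)` with `a > 0`, all of which lie in the semiring of power series with
nonnegative coefficients.
-/

open PowerSeries Finset

namespace PowerSeries

section Nonneg

variable {R : Type*} [CommSemiring R] [PartialOrder R] [IsOrderedRing R]

def nonnegCoeffs : Subsemiring R⟦X⟧ where
  carrier := {f | ∀ n, 0 ≤ coeff n f}
  mul_mem' {f g} hf hg n := by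
    rw [coeff_mul]
    exact sum_nonneg fun p _ => mul_nonneg (hf p.1) (hg p.2)
  one_mem' n := by
    rw [coeff_one]
    split_ifs <;> simp
  add_mem' hf hg n := by
    rw [map_add]
    exact add_nonneg (hf n) (hg n)
  zero_mem' n := by simp

theorem mem_nonnegCoeffs {f : R⟦X⟧} : f ∈ nonnegCoeffs ↔ ∀ n, 0 ≤ coeff n f := Iff.rfl

theorem X_mem_nonnegCoeffs : (X : R⟦X⟧) ∈ nonnegCoeffs := fun n => by
  rw [coeff_X]
  split_ifs <;> simp

end Nonneg

variable {k : Type*} [Field k] [PartialOrder k] [IsOrderedRing k]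

theorem inv_one_sub_mem_nonnegCoeffs {g : k⟦X⟧} (hg : g ∈ nonnegCoeffs)
    (hg0 : constantCoeff g = 0) : (1 - g)⁻¹ ∈ nonnegCoeffs := by
  set ψ := (1 - g)⁻¹
  -- `ψ = 1 + g ψ` expresses each coefficient of `ψ` through earlier ones, with weights `≥ 0`
  have hψ : ψ = 1 + g * ψ := by
    have := PowerSeries.mul_inv_cancel (1 - g) (by simp [hg0])
    linear_combination this
  rw [mem_nonnegCoeffs] at hg ⊢
  intro n
  induction n using Nat.strong_induction_on with
  | _ n ih =>
    rw [hψ, map_add, coeff_mul]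
    refine add_nonneg (mem_nonnegCoeffs.1 (one_mem _) n) (sum_nonneg fun p hp => ?_)
    rcases Nat.eq_zero_or_pos p.1 with h | h
    · simp [h, hg0]
    · exact mul_nonneg (hg p.1) (ih p.2 (by have := mem_antidiagonal.1 hp; omega))

theorem inv_one_sub_X_pow_mem_nonnegCoeffs {a : ℕ} (ha : 0 < a) :
    (1 - X ^ a : k⟦X⟧)⁻¹ ∈ nonnegCoeffs :=
  inv_one_sub_mem_nonnegCoeffs (pow_mem X_mem_nonnegCoeffs a) (by simp [ha.ne'])

theorem one_sub_X_pow_mul_inv_mem_nonnegCoeffs {a b : ℕ} (hb : 0 < b) (hba : b ∣ a) :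
    (1 - X ^ a : k⟦X⟧) * (1 - X ^ b)⁻¹ ∈ nonnegCoeffs := by
  obtain ⟨c, rfl⟩ := hba
  rw [pow_mul, ← mul_neg_geom_sum, mul_right_comm,
    PowerSeries.mul_inv_cancel _ (by simp [hb.ne']), one_mul]
  exact sum_mem fun j _ => pow_mem (pow_mem X_mem_nonnegCoeffs _) _

end PowerSeries

/-- The `q`-Pochhammer symbol `(q^a; q^m)_n`, with `X` for `q`. -/
noncomputable def qPoch {R : Type*} [CommRing R] (a m n : ℕ) : R⟦X⟧ :=
  ∏ l ∈ range n, (1 - X ^ (a + l * m))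

section qPoch

variable {R : Type*} [CommRing R] (a m n : ℕ)

theorem qPoch_zero : (qPoch a m 0 : R⟦X⟧) = 1 := prod_range_zero _

theorem qPoch_succ : (qPoch a m (n + 1) : R⟦X⟧) = qPoch a m n * (1 - X ^ (a + n * m)) :=
  prod_range_succ _ _

theorem qPoch_succ' : (qPoch a m (n + 1) : R⟦X⟧) = (1 - X ^ a) * qPoch (a + m) m n := by
  rw [qPoch, prod_range_succ', zero_mul, add_zero, mul_comm, qPoch]
  congr 1
  refine prod_congr rfl fun l _ => ?_
  ring_nf

theorem qPoch_one : (qPoch a m 1 : R⟦X⟧) = 1 - X ^ a := by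
  rw [qPoch_succ', qPoch_zero, mul_one]

end qPoch

section OrderedField

variable {k : Type*} [Field k] [PartialOrder k] [IsOrderedRing k]

theorem qPoch_inv_mem_nonnegCoeffs {a : ℕ} (ha : 0 < a) (m n : ℕ) :
    (qPoch a m n : k⟦X⟧)⁻¹ ∈ nonnegCoeffs := by
  induction n with
  | zero => rw [qPoch_zero, inv_one]; exact one_mem _
  | succ n ih =>
    rw [qPoch_succ, PowerSeries.mul_inv_rev]
    exact mul_mem (inv_one_sub_X_pow_mem_nonnegCoeffs (by omega)) ih

/-- `W(i)`, with `Q(L)/Q(i-1)` written as a product of three `q`-Pochhammer symbols. -/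
noncomputable def W (x y r R m L i : ℕ) : k⟦X⟧ :=
  X ^ (m * (i - 1) + x) * (1 - X ^ ((r - 1) * x)) * (1 - X ^ (R * y)) *
      (1 - X ^ (m * (i - 1) + y)) *
    (qPoch x m i * qPoch y m i * qPoch (r * x + R * y) m i)⁻¹ *
    (qPoch (m * (i - 1) + r * x) m (L - i + 1) * qPoch (m * (i - 1) + R * y) m (L - i + 1) *
      qPoch (m * (i - 1) + x + y) m (L - i + 1))⁻¹

variable {x y r R m L : ℕ}

theorem W_one_mem_nonnegCoeffs (hx : 0 < x) (hy : 0 < y) (hr : 0 < r) (hR : 0 < R)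
    (hL : 1 ≤ L) : (W x y r R m L 1 : k⟦X⟧) ∈ nonnegCoeffs := by
  obtain ⟨L, rfl⟩ : ∃ L', L = L' + 1 := ⟨L - 1, by omega⟩
  have hW : (W x y r R m (L + 1) 1 : k⟦X⟧) =
      X ^ x * ((1 - X ^ ((r - 1) * x)) * (1 - X ^ x)⁻¹) *
        ((1 - X ^ (R * y)) * (1 - X ^ (R * y))⁻¹) * ((1 - X ^ y) * (1 - X ^ y)⁻¹) *
        ((1 - X ^ (r * x + R * y))⁻¹ * (qPoch (r * x) m (L + 1))⁻¹ *
          (qPoch (R * y + m) m L)⁻¹ * (qPoch (x + y) m (L + 1))⁻¹) := by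
    simp only [W, Nat.sub_self, mul_zero, zero_add, Nat.add_sub_cancel, qPoch_one,
      qPoch_succ' (R * y), PowerSeries.mul_inv_rev]
    ring
  have hRy : 0 < R * y := Nat.mul_pos hR hy
  have hrx : 0 < r * x := Nat.mul_pos hr hx
  rw [hW]
  refine mul_mem (mul_mem (mul_mem (mul_mem (pow_mem X_mem_nonnegCoeffs _) ?_) ?_) ?_)
    (mul_mem (mul_mem (mul_mem ?_ ?_) ?_) ?_)
  · exact one_sub_X_pow_mul_inv_mem_nonnegCoeffs hx (dvd_mul_left x _)
  · exact one_sub_X_pow_mul_inv_mem_nonnegCoeffs hRy dvd_rfl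
  · exact one_sub_X_pow_mul_inv_mem_nonnegCoeffs hy dvd_rfl
  · exact inv_one_sub_X_pow_mem_nonnegCoeffs (by omega)
  · exact qPoch_inv_mem_nonnegCoeffs hrx _ _
  · exact qPoch_inv_mem_nonnegCoeffs (by omega) _ _
  · exact qPoch_inv_mem_nonnegCoeffs (by omega) _ _

theorem W_add_two_mem_nonnegCoeffs (hx : 0 < x) (hy : 0 < y) (hr : 0 < r) (hR : 0 < R)
    (t : ℕ) :
    (W x y r R m L (t + 1 + 1) : k⟦X⟧) ∈ nonnegCoeffs := by
  have hW : (W x y r R m L (t + 1 + 1) : k⟦X⟧) =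
      X ^ (m * (t + 1) + x) * ((1 - X ^ ((r - 1) * x)) * (1 - X ^ x)⁻¹) *
        ((1 - X ^ (R * y)) * (1 - X ^ y)⁻¹) *
        ((1 - X ^ (m * (t + 1) + y)) * (1 - X ^ (y + (t + 1) * m))⁻¹) *
        ((qPoch (x + m) m (t + 1))⁻¹ * (qPoch (y + m) m t)⁻¹ *
          (qPoch (r * x + R * y) m (t + 1 + 1))⁻¹ *
          (qPoch (m * (t + 1) + r * x) m (L - (t + 1 + 1) + 1))⁻¹ *
          (qPoch (m * (t + 1) + R * y) m (L - (t + 1 + 1) + 1))⁻¹ *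
          (qPoch (m * (t + 1) + x + y) m (L - (t + 1 + 1) + 1))⁻¹) := by
    rw [W, Nat.add_sub_cancel, qPoch_succ' x, qPoch_succ y, qPoch_succ' y]
    simp only [PowerSeries.mul_inv_rev]
    ring
  have hrx : 0 < r * x := Nat.mul_pos hr hx
  have hRy : 0 < R * y := Nat.mul_pos hR hy
  rw [hW]
  refine mul_mem (mul_mem (mul_mem (mul_mem (pow_mem X_mem_nonnegCoeffs _) ?_) ?_) ?_)
    (mul_mem (mul_mem (mul_mem (mul_mem (mul_mem ?_ ?_) ?_) ?_) ?_) ?_)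
  · exact one_sub_X_pow_mul_inv_mem_nonnegCoeffs hx (dvd_mul_left x _)
  · exact one_sub_X_pow_mul_inv_mem_nonnegCoeffs hy (dvd_mul_left y _)
  · exact one_sub_X_pow_mul_inv_mem_nonnegCoeffs (by omega) (dvd_of_eq (by ring))
  all_goals exact qPoch_inv_mem_nonnegCoeffs (by omega) _ _

end OrderedField

theorem W_nonneg_general (x y r R m L i : ℕ) (hx : 0 < x) (hy : 0 < y)
    (hr : 0 < r) (hR : 0 < R) (hi : 1 ≤ i) (hiL : i ≤ L) (n : ℕ) :
    0 ≤ PowerSeries.coeff (R := ℚ) n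
      ((X : ℚ⟦X⟧) ^ (m * (i - 1) + x) * (1 - X ^ ((r - 1) * x)) * (1 - X ^ (R * y)) *
          (1 - X ^ (m * (i - 1) + y)) *
        ((∏ l ∈ range i, (1 - (X : ℚ⟦X⟧) ^ (x + l * m))) *
         (∏ l ∈ range i, (1 - (X : ℚ⟦X⟧) ^ (y + l * m))) *
         (∏ l ∈ range i, (1 - (X : ℚ⟦X⟧) ^ (r * x + R * y + l * m))))⁻¹ *
        ((∏ l ∈ range (L - i + 1), (1 - (X : ℚ⟦X⟧) ^ (m * (i - 1) + r * x + l * m))) *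
         (∏ l ∈ range (L - i + 1), (1 - (X : ℚ⟦X⟧) ^ (m * (i - 1) + R * y + l * m))) *
         (∏ l ∈ range (L - i + 1), (1 - (X : ℚ⟦X⟧) ^ (m * (i - 1) + x + y + l * m))))⁻¹) := by
  suffices (W x y r R m L i : ℚ⟦X⟧) ∈ nonnegCoeffs from mem_nonnegCoeffs.1 this n
  obtain rfl | ⟨t, rfl⟩ : i = 1 ∨ ∃ t, i = t + 1 + 1 := by
    rcases hi.eq_or_lt with h | h
    · exact .inl h.symm
    · exact .inr ⟨i - 2, by omega⟩
  · exact W_one_mem_nonnegCoeffs hx hy hr hR hiL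
  · exact W_add_two_mem_nonnegCoeffs hx hy hr hR t

theorem W_nonneg (x y r R m L i : ℕ) (hx : 0 < x) (hy : 0 < y)
    (hr : 0 < r) (hR : 0 < R) (hm : 0 < m) (hi : 1 ≤ i) (hiL : i ≤ L) (n : ℕ) :
    0 ≤ PowerSeries.coeff (R := ℚ) n
      ((X : ℚ⟦X⟧) ^ (m * (i - 1) + x) * (1 - X ^ ((r - 1) * x)) * (1 - X ^ (R * y)) *
          (1 - X ^ (m * (i - 1) + y)) *
        ((∏ l ∈ range i, (1 - (X : ℚ⟦X⟧) ^ (x + l * m))) *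
         (∏ l ∈ range i, (1 - (X : ℚ⟦X⟧) ^ (y + l * m))) *
         (∏ l ∈ range i, (1 - (X : ℚ⟦X⟧) ^ (r * x + R * y + l * m))))⁻¹ *
        ((∏ l ∈ range (L - i + 1), (1 - (X : ℚ⟦X⟧) ^ (m * (i - 1) + r * x + l * m))) *
         (∏ l ∈ range (L - i + 1), (1 - (X : ℚ⟦X⟧) ^ (m * (i - 1) + R * y + l * m))) *
         (∏ l ∈ range (L - i + 1), (1 - (X : ℚ⟦X⟧) ^ (m * (i - 1) + x + y + l * m))))⁻¹) :=
  W_nonneg_general x y r R m L i hx hy hr hR hi hiL n
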